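/- arXiv:2411.13723 — 4 statements merged into one kernel-verified Lean document; each statement's English description precedes it below -/
import Mathlib

section
/- If < is an F-ordering of a Steiner triple system M over a subset A, then the linear order obtained as the sum (A, <↾A) + (M∖A, <↾(M∖A)) is an F-ordering of M over A in which A is an initial segment; moreover if < is a well-order then so is the new order. -/
/-- A Steiner quasigroup operation. -/
def IsSQ {M : Type*} (op : M → M → M) : Prop :=
  (∀ x y, op x y = op y x) ∧ (∀ x, op x x = x) ∧ (∀ x y, op x (op x y) = y)

/-- An F-ordering of the STS `(M, op)` over `A`: a (strict) linear ordering such that every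
`a ∈ M` is the product of a unique pair `{a₁, a₂}` with each `aᵢ ∈ A` or `aᵢ < a`. -/
def IsFOrderOver {M : Type*} (op : M → M → M) (A : Set M) (r : M → M → Prop) : Prop :=
  IsStrictTotalOrder M r ∧
    ∀ a : M, ∃ a₁ a₂ : M, a = op a₁ a₂ ∧ (a₁ ∈ A ∨ r a₁ a) ∧ (a₂ ∈ A ∨ r a₂ a) ∧
      ∀ b₁ b₂ : M, a = op b₁ b₂ → (b₁ ∈ A ∨ r b₁ a) → (b₂ ∈ A ∨ r b₂ a) →
        ({b₁, b₂} : Set M) = {a₁, a₂}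

/-- The sum order `(A, r↾A) + (M∖A, r↾(M∖A))`: everything in `A` precedes everything
outside `A`. -/
def sumOrder {M : Type*} (A : Set M) (r : M → M → Prop) : M → M → Prop := fun a b =>
  (a ∈ A ∧ b ∉ A) ∨ (a ∈ A ∧ b ∈ A ∧ r a b) ∨ (a ∉ A ∧ b ∉ A ∧ r a b)

/-! The sum order is the lexicographic order on the key `a ↦ (a ∉ A, a)`, hence inherits
linearity and well-foundedness; for the F-property, an element of `A` is generated by the
pair `{a, a}`, which `r` already forces to be its unique generating pair. -/

section SumOrder

variable {M : Type*} {A : Set M} {r : M → M → Prop} {a b : M}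

open scoped Classical in
theorem sumOrder_eq_onFun :
    sumOrder A r = Function.onFun (Prod.Lex (· < ·) r) fun a => (decide (a ∉ A), a) := by
  ext a b
  by_cases ha : a ∈ A <;> by_cases hb : b ∈ A <;>
    simp [sumOrder, Function.onFun, Prod.lex_def, ha, hb]

theorem isStrictTotalOrder_sumOrder [IsStrictTotalOrder M r] :
    IsStrictTotalOrder M (sumOrder A r) := by
  classical
  have : IsStrictTotalOrder (Bool × M) (Prod.Lex (· < ·) r) := {}
  rw [sumOrder_eq_onFun]
  exact Function.Injective.isStrictTotalOrder_onFun _ fun _ _ h => congrArg Prod.snd h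

theorem wellFounded_sumOrder (hr : WellFounded r) : WellFounded (sumOrder A r) := by
  classical
  rw [sumOrder_eq_onFun]
  exact InvImage.wf _ (wellFounded_lt.prod_lex hr)

theorem mem_of_sumOrder_of_mem (ha : a ∈ A) (h : sumOrder A r b a) : b ∈ A := by
  rcases h with ⟨hb, -⟩ | ⟨hb, -⟩ | ⟨-, hna, -⟩
  exacts [hb, hb, absurd ha hna]

theorem mem_or_of_mem_or_sumOrder (h : b ∈ A ∨ sumOrder A r b a) : b ∈ A ∨ r b a := by
  rcases h with hb | ⟨hb, -⟩ | ⟨hb, -⟩ | ⟨-, -, hr⟩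
  exacts [.inl hb, .inl hb, .inl hb, .inr hr]

theorem mem_or_sumOrder_of_not_mem (ha : a ∉ A) (h : b ∈ A ∨ r b a) :
    b ∈ A ∨ sumOrder A r b a := by
  by_cases hb : b ∈ A
  · exact .inl hb
  · exact .inr (.inr (.inr ⟨hb, ha, h.resolve_left hb⟩))

theorem isFOrderOver_sumOrder {op : M → M → M} (hidem : ∀ x, op x x = x)
    (h : IsFOrderOver op A r) : IsFOrderOver op A (sumOrder A r) := by
  obtain ⟨hr, hF⟩ := h
  refine ⟨isStrictTotalOrder_sumOrder, fun a => ?_⟩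
  obtain ⟨a₁, a₂, ha, h₁, h₂, huniq⟩ := hF a
  have hlift :
      ∀ b ∈ ({a₁, a₂} : Set M), b ∈ A ∨ r b a → b ∈ A ∨ sumOrder A r b a := by
    intro b hb hbr
    by_cases haA : a ∈ A
    · have hpair : ({a, a} : Set M) = {a₁, a₂} :=
        huniq a a (hidem a).symm (.inl haA) (.inl haA)
      rw [← hpair, Set.pair_eq_singleton, Set.mem_singleton_iff] at hb
      exact .inl (hb ▸ haA)
    · exact mem_or_sumOrder_of_not_mem haA hbr
  exact ⟨a₁, a₂, ha, hlift a₁ (by simp) h₁, hlift a₂ (by simp) h₂,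
    fun b₁ b₂ hb hb₁ hb₂ =>
      huniq b₁ b₂ hb (mem_or_of_mem_or_sumOrder hb₁) (mem_or_of_mem_or_sumOrder hb₂)⟩

end SumOrder

/-- The sum of an F-ordering of `M` over `A` is again an F-ordering of `M` over `A`, has `A`
as an initial segment, and is a well-order whenever the original order was. -/
theorem sum_FOrder {M : Type*} (op : M → M → M) (hSQ : IsSQ op) (A : Set M)
    (r : M → M → Prop) (h : IsFOrderOver op A r) :
    IsFOrderOver op A (sumOrder A r) ∧
      (∀ a ∈ A, ∀ b : M, sumOrder A r b a → b ∈ A) ∧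
      (WellFounded r → WellFounded (sumOrder A r)) :=
  ⟨isFOrderOver_sumOrder hSQ.2.1 h, fun _ ha _ hb => mem_of_sumOrder_of_mem ha hb,
    wellFounded_sumOrder⟩
end

section
/- If < is an HF-ordering of a Steiner triple system M and A ⊆ M is <-closed, then the substructure ⟨A⟩ generated by A under the quasigroup operation is also <-closed. -/
/-- An HF-ordering of the STS given by a Steiner quasigroup: a strict linear order such that
every element lies in at most one block together with two smaller elements. -/
def IsHFOrderQ {M : Type*} (op : M → M → M) (r : M → M → Prop) : Prop :=
  IsStrictTotalOrder M r ∧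
    ∀ a b₁ b₂ c₁ c₂ : M, b₁ ≠ b₂ → c₁ ≠ c₂ → a = op b₁ b₂ → a = op c₁ c₂ →
      r b₁ a → r b₂ a → r c₁ a → r c₂ a → ({b₁, b₂} : Set M) = {c₁, c₂}

/-- `A` is `<`-closed: if `b ∈ A` lies in a block `{b, b₁, b₂}` with `b₁, b₂ < b`, then
`b₁, b₂ ∈ A`. -/
def IsClosedQ {M : Type*} (op : M → M → M) (r : M → M → Prop) (A : Set M) : Prop :=
  ∀ b ∈ A, ∀ b₁ b₂ : M, b₁ ≠ b₂ → b = op b₁ b₂ → r b₁ b → r b₂ b → b₁ ∈ A ∧ b₂ ∈ A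

/-- The subsystem generated by `A`. -/
def SubGen {M : Type*} (op : M → M → M) (A : Set M) : Set M :=
  ⋂₀ {S : Set M | A ⊆ S ∧ ∀ x ∈ S, ∀ y ∈ S, op x y ∈ S}

/-!
The largest `<`-closed subset `C` of `⟨A⟩` contains `A`, and it is closed under the operation:
for `x, y ∈ C` the set `C ∪ {x·y}` is again `<`-closed. Indeed, if the largest element of the
block `{x, y, x·y}` is `x` or `y`, then `x·y` already lies in `C`; if it is `x·y`, the
HF-property says that `{x, y}` is the only pair below `x·y` forming a block with it. Hence
`C = ⟨A⟩`.
-/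

section

variable {M : Type*} {op : M → M → M} {r : M → M → Prop}

theorem IsSQ.op_op_cancel_right (hSQ : IsSQ op) (x y : M) : op (op x y) y = x := by
  rw [hSQ.1, hSQ.1 x y, hSQ.2.2]

theorem subset_subGen (A : Set M) : A ⊆ SubGen op A :=
  fun _ ha => Set.mem_sInter.2 fun _ hS => hS.1 ha

theorem op_mem_subGen {A : Set M} {x y : M} (hx : x ∈ SubGen op A) (hy : y ∈ SubGen op A) :
    op x y ∈ SubGen op A :=
  Set.mem_sInter.2 fun S hS => hS.2 x (hx S hS) y (hy S hS)

theorem subGen_subset {A S : Set M} (hAS : A ⊆ S) (hS : ∀ x ∈ S, ∀ y ∈ S, op x y ∈ S) :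
    SubGen op A ⊆ S :=
  Set.sInter_subset_of_mem ⟨hAS, hS⟩

theorem IsClosedQ.sUnion {𝒯 : Set (Set M)} (h𝒯 : ∀ T ∈ 𝒯, IsClosedQ op r T) :
    IsClosedQ op r (⋃₀ 𝒯) := by
  rintro b ⟨T, hT, hb⟩ b₁ b₂ hne hb₁₂ h₁ h₂
  obtain ⟨hb₁, hb₂⟩ := h𝒯 T hT b hb b₁ b₂ hne hb₁₂ h₁ h₂
  exact ⟨⟨T, hT, hb₁⟩, ⟨T, hT, hb₂⟩⟩

section StrictTotalOrder

variable [IsStrictTotalOrder M r] {C : Set M}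

theorem IsClosedQ.mem_of_lt_left (hSQ : IsSQ op) (hC : IsClosedQ op r C) {x y b : M}
    (hx : x ∈ C) (hy : y ∈ C) (hb : op x y = b) (hbx : b ≠ x) (hby : b ≠ y) (hlt : r b x) :
    b ∈ C := by
  subst hb
  rcases trichotomous_of r y x with hyx | rfl | hxy
  · exact (hC x hx _ y hby (hSQ.op_op_cancel_right x y).symm hlt hyx).1
  · exact absurd (hSQ.2.1 y) hby
  · exact (hC y hy x _ (Ne.symm hbx) (hSQ.2.2 x y).symm hxy (trans_of r hlt hxy)).2

theorem IsClosedQ.op_mem_or_lt_op (hSQ : IsSQ op) (hC : IsClosedQ op r C) {x y : M}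
    (hx : x ∈ C) (hy : y ∈ C) :
    op x y ∈ C ∨ x ≠ y ∧ r x (op x y) ∧ r y (op x y) := by
  set b := op x y with hb
  by_cases hbx : b = x
  · exact Or.inl (hbx ▸ hx)
  by_cases hby : b = y
  · exact Or.inl (hby ▸ hy)
  have hxy : x ≠ y := fun h => hbx (by rw [hb, h, hSQ.2.1])
  by_cases hxb : r x b
  · by_cases hyb : r y b
    · exact Or.inr ⟨hxy, hxb, hyb⟩
    have hlt : r b y := (trichotomous_of r y b).resolve_left hyb |>.resolve_left (Ne.symm hby)
    exact Or.inl (hC.mem_of_lt_left hSQ hy hx (hSQ.1 y x ▸ hb.symm) hby hbx hlt)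
  · have hlt : r b x := (trichotomous_of r x b).resolve_left hxb |>.resolve_left (Ne.symm hbx)
    exact Or.inl (hC.mem_of_lt_left hSQ hx hy hb.symm hbx hby hlt)

end StrictTotalOrder

theorem IsClosedQ.insert_op (hSQ : IsSQ op) (hr : IsHFOrderQ op r) {C : Set M}
    (hC : IsClosedQ op r C) {x y : M} (hx : x ∈ C) (hy : y ∈ C) :
    IsClosedQ op r (insert (op x y) C) := by
  have : IsStrictTotalOrder M r := hr.1
  rintro b (rfl | hb) c₁ c₂ hne hc₁₂ h₁ h₂
  · rcases hC.op_mem_or_lt_op hSQ hx hy with hb | ⟨hxy, hxb, hyb⟩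
    · obtain ⟨hc₁, hc₂⟩ := hC _ hb c₁ c₂ hne hc₁₂ h₁ h₂
      exact ⟨Or.inr hc₁, Or.inr hc₂⟩
    have hpair : ({x, y} : Set M) = {c₁, c₂} := hr.2 _ x y c₁ c₂ hxy hne rfl hc₁₂ hxb hyb h₁ h₂
    have hsub : ({c₁, c₂} : Set M) ⊆ C :=
      hpair ▸ Set.insert_subset hx (Set.singleton_subset_iff.2 hy)
    exact ⟨Or.inr (hsub (Set.mem_insert _ _)), Or.inr (hsub (Set.mem_insert_of_mem _ rfl))⟩
  · obtain ⟨hc₁, hc₂⟩ := hC b hb c₁ c₂ hne hc₁₂ h₁ h₂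
    exact ⟨Or.inr hc₁, Or.inr hc₂⟩

end

/-- If `<` is an HF-ordering of a Steiner triple system `M` and `A` is `<`-closed, then the
generated substructure `⟨A⟩` is also `<`-closed. -/
theorem closure_of_closed_is_closed {M : Type*} (op : M → M → M) (hSQ : IsSQ op)
    (r : M → M → Prop) (hr : IsHFOrderQ op r) (A : Set M) (hA : IsClosedQ op r A) :
    IsClosedQ op r (SubGen op A) := by
  set C := ⋃₀ {T | T ⊆ SubGen op A ∧ IsClosedQ op r T}
  have hC : IsClosedQ op r C := IsClosedQ.sUnion fun T hT => hT.2
  have hCA : C ⊆ SubGen op A := Set.sUnion_subset fun T hT => hT.1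
  have hAC : A ⊆ C := Set.subset_sUnion_of_mem ⟨subset_subGen A, hA⟩
  have hop : ∀ x ∈ C, ∀ y ∈ C, op x y ∈ C := fun x hx y hy =>
    Set.mem_sUnion.2 ⟨insert (op x y) C,
      ⟨Set.insert_subset (op_mem_subGen (hCA hx) (hCA hy)) hCA, hC.insert_op hSQ hr hx hy⟩,
      Set.mem_insert _ _⟩
  rwa [(subGen_subset hAC hop).antisymm hCA]
end

section
/- An HF-ordering of an infinite Steiner triple system has no maximum element; moreover, for every a ∈ M and every b ≥ a, there exist b₁, b₂ > b with a = b₁·b₂. -/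
/-- An HF-ordering of an infinite STS has no maximum; moreover for every `a` and every
`b ≥ a` there are `b₁, b₂ > b` with `a = b₁·b₂`. -/
theorem HF_no_max {M : Type*} [Infinite M] (op : M → M → M) (hSQ : IsSQ op)
    (r : M → M → Prop) (hr : IsHFOrderQ op r) :
    (¬∃ m : M, ∀ x : M, x ≠ m → r x m) ∧
      ∀ a b : M, (r a b ∨ a = b) →
        ∃ b₁ b₂ : M, r b b₁ ∧ r b b₂ ∧ a = op b₁ b₂ := by
  classical
  obtain ⟨hcomm, hidem, hcan⟩ := hSQ
  obtain ⟨hord, hHF⟩ := hr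
  haveI := hord
  -- basic quasigroup facts
  have hfix : ∀ x y, op x y = x → y = x := by
    intro x y h
    have h2 := hcan x y
    rw [h, hidem] at h2
    exact h2.symm
  have hfix2 : ∀ x y, op x y = y → y = x := by
    intro x y h
    have h2 : op y x = y := (hcomm y x).trans h
    exact (hfix y x h2).symm ▸ (hfix y x h2)
  have hrep : ∀ x y, x = op y (op x y) := by
    intro x y
    have h := hcan y x
    rw [hcomm y x] at h
    exact h.symm
  -- no maximum
  have hnomax : ¬∃ m : M, ∀ x : M, x ≠ m → r x m := by
    rintro ⟨m, hm⟩
    obtain ⟨x, hx⟩ := exists_ne m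
    obtain ⟨y, hy⟩ := Infinite.exists_notMem_finset ({m, x, op m x} : Finset M)
    simp only [Finset.mem_insert, Finset.mem_singleton, not_or] at hy
    obtain ⟨hym, hyx, hyox⟩ := hy
    have hoxm : op m x ≠ m := fun h => hx (hfix m x h)
    have hoym : op m y ≠ m := fun h => hym (hfix m y h)
    have hxox : x ≠ op m x := fun h => hx (hfix2 m x h.symm)
    have hyoy : y ≠ op m y := fun h => hym (hfix2 m y h.symm)
    have heq := hHF m x (op m x) y (op m y) hxox hyoy (hrep m x) (hrep m y)
      (hm x hx) (hm _ hoxm) (hm y hym) (hm _ hoym)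
    have hmem : y ∈ ({x, op m x} : Set M) := by
      rw [heq]; exact Set.mem_insert _ _
    rcases hmem with h | h
    · exact hyx h
    · exact hyox h
  refine ⟨hnomax, ?_⟩
  intro a b hab
  by_contra hcon
  push_neg at hcon
  have H : ∀ x, r b x → ¬ r b (op a x) := fun x hx hc =>
    hcon x (op a x) hx hc (hrep a x)
  have hale : ∀ z, r b z → r a z := by
    intro z hz
    rcases hab with h | h
    · exact trans_of r h hz
    · exact h ▸ hz
  have hnba : ¬ r b a := by
    intro h
    rcases hab with h' | h'
    · exact irrefl_of r a (trans_of r h' h)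
    · exact irrefl_of r b (h' ▸ h)
  have hle : ∀ x, r b x → r (op a x) x := by
    intro x hx
    rcases trichotomous_of r b (op a x) with h | h | h
    · exact absurd h (H x hx)
    · exact h ▸ hx
    · exact trans_of r h hx
  have hane : ∀ x, r b x → a ≠ op a x := by
    intro x hx h
    have h2 := hcan a x
    rw [← h, hidem] at h2
    exact hnba (h2.symm ▸ hx)
  have habove : ∀ c : M, ∃ z, r c z := by
    intro c
    by_contra hno
    push_neg at hno
    refine hnomax ⟨c, fun x hx => ?_⟩
    rcases trichotomous_of r x c with h | h | h
    · exact h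
    · exact absurd h hx
    · exact absurd h (hno x)
  obtain ⟨z₁, hz₁⟩ := habove b
  obtain ⟨z₂, hz₂⟩ := habove z₁
  have hbz₂ : r b z₂ := trans_of r hz₁ hz₂
  have hz12 : z₁ ≠ z₂ := fun h => irrefl_of r z₁ (h ▸ hz₂)
  have hwz₂ : op z₁ z₂ ≠ z₂ := fun h => hz12 (hfix2 z₁ z₂ h).symm
  -- z₁ cannot be a or op a t for t > b
  have hz₁not : ∀ t, r b t → z₁ ∉ ({a, op a t} : Set M) := by
    intro t ht hmem
    rcases hmem with h | h
    · exact hnba (h ▸ hz₁)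
    · exact H t ht (h ▸ hz₁)
  rcases trichotomous_of r (op z₁ z₂) z₂ with hlt | heqq | hgt
  · -- w < z₂ : HF at z₂
    have hne : z₁ ≠ op z₁ z₂ := fun h => hz12 (hfix z₁ z₂ h.symm).symm
    have heq := hHF z₂ z₁ (op z₁ z₂) a (op a z₂) hne (hane z₂ hbz₂)
      (hcan z₁ z₂).symm (hcan a z₂).symm hz₂ hlt (hale z₂ hbz₂) (hle z₂ hbz₂)
    exact hz₁not z₂ hbz₂ (heq ▸ Set.mem_insert z₁ _)
  · exact hwz₂ heqq
  · -- w > z₂ : HF at w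
    have hbw : r b (op z₁ z₂) := trans_of r hbz₂ hgt
    have hz₁w : r z₁ (op z₁ z₂) := trans_of r hz₂ hgt
    have heq := hHF (op z₁ z₂) z₁ z₂ a (op a (op z₁ z₂)) hz12 (hane _ hbw)
      rfl (hcan a _).symm hz₁w hgt (hale _ hbw) (hle _ hbw)
    exact hz₁not _ hbw (heq ▸ Set.mem_insert z₁ _)
end

section
/- Let < be an HF-ordering of an infinite Steiner triple system M and let n < ω. For every a ∈ M there is a binary tree {a_s : s ∈ 2^{<n}} of distinct elements of M such that a_s = a_{s0}·a_{s1} for all s ∈ 2^{<n-1}, a_s > a for every s, and a_s > a_t whenever s is a proper initial segment of t. -/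
/-
Induction on the depth. In an HF-ordering each `z` is the product of at most one pair of smaller
elements, so for all but two `y < z` the product `y·z` lies above `z`. Given many node-disjoint
trees of depth `n` above `a`, avoiding a finite set `F`, let `z` be the largest of their roots;
some other root `y` has `z < y·z ∉ F`, and putting `y·z` on top of the trees rooted at `y` and `z`
gives a tree of depth `n + 1` avoiding `F`. Depth one needs infinitely many elements above `a`,
which again follows from the HF property: otherwise all but finitely many `y` satisfy `y < a` and
`y·a < a`, so they would all lie in the unique pair below `a`.
-/

namespace IsSQ

variable {M : Type*} {op : M → M → M}

theorem op_op_self_left (hSQ : IsSQ op) (x y : M) : op x (op x y) = y := hSQ.2.2 x y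

theorem op_op_self_right (hSQ : IsSQ op) (x y : M) : op (op x y) y = x := by
  rw [hSQ.1 (op x y), hSQ.1 x, hSQ.op_op_self_left]

theorem op_eq_right_iff (hSQ : IsSQ op) {x y : M} : op x y = y ↔ x = y := by
  refine ⟨fun h => ?_, fun h => h ▸ hSQ.2.1 x⟩
  rw [← hSQ.op_op_self_right x y, h, hSQ.2.1]

end IsSQ

namespace IsHFOrderQ

variable {M : Type*} [LinearOrder M] {op : M → M → M}

theorem exists_pair_of_lt_of_op_lt (hSQ : IsSQ op) (hr : IsHFOrderQ op (· < ·)) (z : M) :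
    ∃ b c : M, ∀ w, w < z → op w z < z → w = b ∨ w = c := by
  by_cases h : ∃ w, w < z ∧ op w z < z
  · obtain ⟨w₀, hw₀z, hw₀⟩ := h
    refine ⟨w₀, op w₀ z, fun w hwz hw => ?_⟩
    have hne : ∀ v, v < z → v ≠ op v z := fun v hv h =>
      hv.ne (by rw [← hSQ.op_op_self_left v z, ← h, hSQ.2.1])
    have hpair := hr.2 z w₀ (op w₀ z) w (op w z) (hne w₀ hw₀z) (hne w hwz)
      (hSQ.op_op_self_left w₀ z).symm (hSQ.op_op_self_left w z).symm hw₀z hw₀ hwz hw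
    have : w ∈ ({w₀, op w₀ z} : Set M) := hpair ▸ Set.mem_insert w _
    simpa using this
  · push Not at h
    exact ⟨z, z, fun w hwz hw => absurd hw (h w hwz).not_gt⟩

theorem infinite_setOf_gt [Infinite M] (hSQ : IsSQ op) (hr : IsHFOrderQ op (· < ·)) (a : M) :
    {x | a < x}.Infinite := by
  intro hfin
  obtain ⟨b, c, hbc⟩ := hr.exists_pair_of_lt_of_op_lt hSQ a
  have hA : {x | ¬ x < a}.Finite :=
    (hfin.insert a).subset fun x hx => (not_lt.mp hx).eq_or_lt.imp Eq.symm id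
  refine Set.infinite_univ
    (((hA.union (hA.image (op · a))).union (Set.toFinite {b, c})).subset fun y _ => ?_)
  by_cases hya : y < a
  · by_cases hyaa : op y a < a
    · exact Or.inr (hbc y hya hyaa)
    · exact Or.inl (Or.inr ⟨op y a, hyaa, hSQ.op_op_self_right y a⟩)
  · exact Or.inl (Or.inl hya)

theorem exists_lt_lt_op_of_card_lt (hSQ : IsSQ op) (hr : IsHFOrderQ op (· < ·))
    {S F : Finset M} (hcard : F.card + 3 < S.card) :
    ∃ y ∈ S, ∃ z ∈ S, y < z ∧ z < op y z ∧ op y z ∉ F := by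
  have hS : S.Nonempty := Finset.card_pos.mp (by omega)
  set z := S.max' hS
  obtain ⟨b, c, hbc⟩ := hr.exists_pair_of_lt_of_op_lt hSQ z
  set B : Finset M := {b, c} ∪ F.image (op z)
  have hB : B.card ≤ 2 + F.card :=
    (Finset.card_union_le _ _).trans (add_le_add Finset.card_le_two Finset.card_image_le)
  obtain ⟨y, hyS, hyz⟩ :=
    Finset.exists_mem_ne (s := S \ B) (by have := Finset.le_card_sdiff B S; omega) z
  rw [Finset.mem_sdiff] at hyS
  have hlt : y < z := (S.le_max' y hyS.1).lt_of_ne hyz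
  refine ⟨y, hyS.1, z, S.max'_mem hS, hlt, ?_, fun hF => hyS.2 ?_⟩
  · refine lt_of_le_of_ne (not_lt.mp fun h => hyS.2 ?_)
      fun h => hyz (hSQ.op_eq_right_iff.mp h.symm)
    exact Finset.mem_union_left _ (by simpa using hbc y hlt h)
  · exact Finset.mem_union_right _
      (Finset.mem_image.mpr ⟨_, hF, by rw [hSQ.1 y z, hSQ.op_op_self_left]⟩)

end IsHFOrderQ

theorem exists_fin_pairwise_disjoint {α β : Type*} (P : α → Prop) (f : α → Set β)
    (hf : ∀ x, P x → (f x).Finite) (h : ∀ F : Set β, F.Finite → ∃ x, P x ∧ Disjoint (f x) F) :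
    ∀ m : ℕ, ∃ xs : Fin m → α,
      (∀ i, P (xs i)) ∧ Pairwise fun i j => Disjoint (f (xs i)) (f (xs j))
  | 0 => ⟨Fin.elim0, fun i => i.elim0, fun i => i.elim0⟩
  | m + 1 => by
    obtain ⟨xs, hP, hdisj⟩ := exists_fin_pairwise_disjoint P f hf h m
    obtain ⟨x, hx, hxdisj⟩ := h (⋃ i, f (xs i)) (Set.finite_iUnion fun i => hf _ (hP i))
    have hx' : ∀ i, Disjoint (f x) (f (xs i)) :=
      fun i => hxdisj.mono_right (Set.subset_iUnion (fun i => f (xs i)) i)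
    refine ⟨Fin.cons x xs, Fin.cases hx hP, fun i j hij => ?_⟩
    induction i using Fin.cases <;> induction j using Fin.cases
    · exact absurd rfl hij
    · exact hx' _
    · exact (hx' _).symm
    · exact hdisj fun h => hij (congrArg Fin.succ h)

section BinaryTree

variable {M : Type*} {n : ℕ}

/-- `t s` is the node at address `s ∈ 2^{<n}`; the values of `t` at longer strings are ignored. -/
structure IsBinaryTreeAbove [LinearOrder M] (op : M → M → M) (n : ℕ) (a : M)
    (t : List Bool → M) : Prop where
  injOn : Set.InjOn t {s | s.length < n}
  eq_op_children : ∀ s : List Bool, s.length + 1 < n →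
    t s = op (t (s ++ [false])) (t (s ++ [true]))
  lt_node : ∀ s : List Bool, s.length < n → a < t s
  lt_of_prefix : ∀ s u : List Bool, u.length < n → s <+: u → s ≠ u → t u < t s

def treeNodes (n : ℕ) (t : List Bool → M) : Set M := t '' {s | s.length < n}

theorem finite_treeNodes (n : ℕ) (t : List Bool → M) : (treeNodes n t).Finite :=
  (List.finite_length_lt Bool n).image t

def joinTree (x : M) (tl tr : List Bool → M) : List Bool → M
  | [] => x
  | false :: s => tl s
  | true :: s => tr s

theorem treeNodes_joinTree (x : M) (tl tr : List Bool → M) :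
    treeNodes (n + 1) (joinTree x tl tr) = insert x (treeNodes n tl ∪ treeNodes n tr) := by
  ext y
  constructor
  · rintro ⟨_ | ⟨_ | _, s⟩, hs, rfl⟩
    · exact Or.inl rfl
    · exact Or.inr (Or.inl ⟨s, Nat.lt_of_succ_lt_succ hs, rfl⟩)
    · exact Or.inr (Or.inr ⟨s, Nat.lt_of_succ_lt_succ hs, rfl⟩)
  · rintro (rfl | ⟨s, hs, rfl⟩ | ⟨s, hs, rfl⟩)
    · exact ⟨[], Nat.succ_pos n, rfl⟩
    · exact ⟨false :: s, Nat.succ_lt_succ hs, rfl⟩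
    · exact ⟨true :: s, Nat.succ_lt_succ hs, rfl⟩

namespace IsBinaryTreeAbove

variable [LinearOrder M] {op : M → M → M} {a x : M} {t tl tr : List Bool → M}

theorem le_root (ht : IsBinaryTreeAbove op n a t) {s : List Bool} (hs : s.length < n) :
    t s ≤ t [] := by
  rcases eq_or_ne [] s with rfl | hne
  · exact le_rfl
  · exact (ht.lt_of_prefix [] s hs List.nil_prefix hne).le

theorem const (hax : a < x) : IsBinaryTreeAbove op 1 a fun _ => x where
  injOn s hs u hu _ := by
    rw [Set.mem_ofPred_eq, Nat.lt_one_iff, List.length_eq_zero_iff] at hs hu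
    rw [hs, hu]
  eq_op_children s hs := by simp at hs
  lt_node _ _ := hax
  lt_of_prefix s u hu hsu hne := by
    rw [Nat.lt_one_iff, List.length_eq_zero_iff] at hu
    subst hu
    exact absurd (List.prefix_nil.mp hsu) hne

theorem join (hl : IsBinaryTreeAbove op n a tl) (hr : IsBinaryTreeAbove op n a tr)
    (hn : 0 < n) (hdisj : Disjoint (treeNodes n tl) (treeNodes n tr))
    (hx : x = op (tl []) (tr [])) (hlx : tl [] < x) (hrx : tr [] < x) :
    IsBinaryTreeAbove op (n + 1) a (joinTree x tl tr) := by
  have hbelow : ∀ b s, (b :: s).length < n + 1 → joinTree x tl tr (b :: s) < x := by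
    rintro (_ | _) s hs
    · exact (hl.le_root (Nat.lt_of_succ_lt_succ hs)).trans_lt hlx
    · exact (hr.le_root (Nat.lt_of_succ_lt_succ hs)).trans_lt hrx
  have hcross : ∀ s u, s.length < n → u.length < n → tl s ≠ tr u := fun s u hs hu h =>
    Set.disjoint_left.mp hdisj ⟨s, hs, rfl⟩ ⟨u, hu, h.symm⟩
  refine ⟨?_, ?_, ?_, ?_⟩
  · rintro (_ | ⟨b, s⟩) hs (_ | ⟨c, u⟩) hu h
    · rfl
    · exact absurd h (hbelow c u hu).ne'
    · exact absurd h (hbelow b s hs).ne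
    · have hs' := Nat.lt_of_succ_lt_succ hs
      have hu' := Nat.lt_of_succ_lt_succ hu
      cases b <;> cases c
      · rw [hl.injOn hs' hu' h]
      · exact absurd h (hcross s u hs' hu')
      · exact absurd h.symm (hcross u s hu' hs')
      · rw [hr.injOn hs' hu' h]
  · rintro (_ | ⟨_ | _, s⟩) hs
    · exact hx
    · exact hl.eq_op_children s (Nat.lt_of_succ_lt_succ hs)
    · exact hr.eq_op_children s (Nat.lt_of_succ_lt_succ hs)
  · rintro (_ | ⟨_ | _, s⟩) hs
    · exact (hl.lt_node [] hn).trans hlx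
    · exact hl.lt_node s (Nat.lt_of_succ_lt_succ hs)
    · exact hr.lt_node s (Nat.lt_of_succ_lt_succ hs)
  · rintro (_ | ⟨b, s⟩) (_ | ⟨c, u⟩) hu hsu hne
    · exact absurd rfl hne
    · exact hbelow c u hu
    · exact absurd (List.prefix_nil.mp hsu) (List.cons_ne_nil b s)
    · obtain ⟨rfl, hsu'⟩ := List.cons_prefix_cons.mp hsu
      have hne' : s ≠ u := fun h => hne (h ▸ rfl)
      cases b
      · exact hl.lt_of_prefix s u (Nat.lt_of_succ_lt_succ hu) hsu' hne'
      · exact hr.lt_of_prefix s u (Nat.lt_of_succ_lt_succ hu) hsu' hne'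

end IsBinaryTreeAbove

end BinaryTree

section Existence

variable {M : Type*} [LinearOrder M] {op : M → M → M}

theorem exists_isBinaryTreeAbove_succ (hSQ : IsSQ op) (hr : IsHFOrderQ op (· < ·)) {n : ℕ}
    (hn : 0 < n) {a : M}
    (ih : ∀ F : Finset M, ∃ t, IsBinaryTreeAbove op n a t ∧ Disjoint (treeNodes n t) ↑F)
    (F : Finset M) :
    ∃ t, IsBinaryTreeAbove op (n + 1) a t ∧ Disjoint (treeNodes (n + 1) t) ↑F := by
  obtain ⟨ts, hts, hdisj⟩ := exists_fin_pairwise_disjoint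
    (fun t => IsBinaryTreeAbove op n a t ∧ Disjoint (treeNodes n t) ↑F) (treeNodes n)
    (fun t _ => finite_treeNodes n t)
    (fun G hG => by
      obtain ⟨t, ht, htG⟩ := ih (F ∪ hG.toFinset)
      rw [Finset.coe_union, Set.Finite.coe_toFinset, Set.disjoint_union_right] at htG
      exact ⟨t, ⟨ht, htG.1⟩, htG.2⟩)
    (F.card + 4)
  have hroot : ∀ i, ts i [] ∈ treeNodes n (ts i) := fun i => ⟨[], hn, rfl⟩
  have hinj : Function.Injective fun i => ts i [] := fun i j (h : ts i [] = ts j []) =>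
    by_contra fun hij => Set.disjoint_left.mp (hdisj hij) (hroot i) (h ▸ hroot j)
  obtain ⟨y, hy, z, hz, hyz, hzx, hxF⟩ := hr.exists_lt_lt_op_of_card_lt hSQ
    (S := Finset.univ.image fun i => ts i []) (F := F)
    (by rw [Finset.card_image_of_injective _ hinj]; simp)
  obtain ⟨j, -, rfl⟩ := Finset.mem_image.mp hy
  obtain ⟨i, -, rfl⟩ := Finset.mem_image.mp hz
  have hji : j ≠ i := fun h => hyz.ne (h ▸ rfl)
  refine ⟨joinTree _ (ts j) (ts i),
    (hts j).1.join (hts i).1 hn (hdisj hji) rfl (hyz.trans hzx) hzx, ?_⟩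
  rw [treeNodes_joinTree, Set.disjoint_insert_left]
  exact ⟨hxF, Set.disjoint_union_left.mpr ⟨(hts j).2, (hts i).2⟩⟩

theorem exists_isBinaryTreeAbove [Infinite M] (hSQ : IsSQ op) (hr : IsHFOrderQ op (· < ·))
    (a : M) : ∀ (n : ℕ) (F : Finset M),
      ∃ t, IsBinaryTreeAbove op n a t ∧ Disjoint (treeNodes n t) ↑F
  | 0, _ => ⟨fun _ => a, ⟨by simp, by simp, by simp, by simp⟩, by simp [treeNodes]⟩
  | 1, F => by
    obtain ⟨x, hax, hxF⟩ := (hr.infinite_setOf_gt hSQ a).exists_notMem_finset F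
    exact ⟨fun _ => x, .const hax, Set.disjoint_left.mpr fun _ ⟨_, _, h⟩ => h ▸ hxF⟩
  | n + 2, F => exists_isBinaryTreeAbove_succ hSQ hr n.succ_pos
      (exists_isBinaryTreeAbove hSQ hr a (n + 1)) F

end Existence

/-- For every `a` in an infinite STS with an HF-ordering and every `n`, there is a binary
tree `{a_s : s ∈ 2^{<n}}` of distinct elements above `a`, with `a_s = a_{s0}·a_{s1}` and
`a_s > a_t` whenever `s` is a proper initial segment of `t`. -/
theorem HF_binary_tree {M : Type*} [Infinite M] (op : M → M → M) (hSQ : IsSQ op)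
    (r : M → M → Prop) (hr : IsHFOrderQ op r) (n : ℕ) (a : M) :
    ∃ t : List Bool → M,
      (∀ s u : List Bool, s.length < n → u.length < n → t s = t u → s = u) ∧
      (∀ s : List Bool, s.length + 1 < n →
        t s = op (t (s ++ [false])) (t (s ++ [true]))) ∧
      (∀ s : List Bool, s.length < n → r a (t s)) ∧
      (∀ s u : List Bool, u.length < n → s <+: u → s ≠ u → r (t u) (t s)) := by
  classical
  have := hr.1
  -- the `<` of `linearOrderOfSTO r` is `r` itself, so the results about `<` apply verbatim
  let : LinearOrder M := linearOrderOfSTO r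
  obtain ⟨t, ht, -⟩ := exists_isBinaryTreeAbove hSQ hr a n ∅
  exact ⟨t, fun s u hs hu => ht.injOn hs hu, ht.eq_op_children, ht.lt_node, ht.lt_of_prefix⟩
end
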